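/- Let f : (ZMod 2)^n → ℝ be a Boolean function (f(x) ∈ {−1,1} for all x). Let α ∈ (ZMod 2)^n be such that |f̂(α)| is maximal over all Fourier coefficients, and let β ≠ α be such that |f̂(β)| is maximal over all γ ≠ α; assume f̂(β) ≠ 0, and set δ = α + β. If f̂(α)·f̂(β) > 0 then (1/2)·∑_{γ ∈ (ZMod 2)^n} |f̂(γ) + f̂(γ+δ)| ≤ ‖f̂‖₁ − |f̂(α)| and (1/2)·∑_{γ ∈ (ZMod 2)^n} |f̂(γ) − f̂(γ+δ)| ≤ ‖f̂‖₁ − |f̂(β)|. If f̂(α)·f̂(β) < 0 then (1/2)·∑_{γ ∈ (ZMod 2)^n} |f̂(γ) + f̂(γ+δ)| ≤ ‖f̂‖₁ − |f̂(β)| and (1/2)·∑_{γ ∈ (ZMod 2)^n} |f̂(γ) − f̂(γ+δ)| ≤ ‖f̂‖₁ − |f̂(α)|. -/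

import Mathlib

/-!
For Boolean `f` the autocorrelation `∑_γ f̂(γ) f̂(γ + δ)` is the Fourier coefficient of `f² = 1`
at `δ ≠ 0`, so it vanishes. The restricted norm `(1/2) ∑_γ |f̂(γ) ± f̂(γ + δ)|` equals `‖f̂‖₁` minus
half the total defect `|f̂(γ)| + |f̂(γ + δ)| - |f̂(γ) ± f̂(γ + δ)|` of the triangle inequality.
If the sign makes `f̂(α)` and `±f̂(β)` opposite, the defect at `γ = α` alone is `2|f̂(β)|`.
Otherwise the terms `γ ∈ {α, β}` contribute `2 f̂(α) f̂(β)` to the vanishing autocorrelation, so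
the remaining `γ` carry a correlation of size `2|f̂(α) f̂(β)|`; all their coefficients are bounded
by `|f̂(β)|`, and `-2ac ≤ B (|a| + |c| - |a + c|)` for `|a|, |c| ≤ B`, so their defect is at least
`4|f̂(α)|`.
-/

/-- The character `χ_α(x) = (-1)^{⟨α,x⟩}` on the Boolean cube `(ZMod 2)^n`. -/
noncomputable def chi {n : ℕ} (α x : Fin n → ZMod 2) : ℝ :=
  if (∑ i, α i * x i : ZMod 2) = 0 then 1 else -1

/-- The Fourier coefficient `f̂(α) = 2^{-n} ∑_x f(x) χ_α(x)`. -/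
noncomputable def fhat {n : ℕ} (f : (Fin n → ZMod 2) → ℝ) (α : Fin n → ZMod 2) : ℝ :=
  (2 ^ n : ℝ)⁻¹ * ∑ x : Fin n → ZMod 2, f x * chi α x

open Finset

lemma abs_add_abs_sub_abs_add_of_mul_neg {a c : ℝ} (h : a * c < 0) (hca : |c| ≤ |a|) :
    |a| + |c| - |a + c| = 2 * |c| := by
  rcases abs_cases a with ⟨ha, _⟩ | ⟨ha, _⟩ <;> rcases abs_cases c with ⟨hc, _⟩ | ⟨hc, _⟩ <;>
    rcases abs_cases (a + c) with ⟨hac, _⟩ | ⟨hac, _⟩ <;> nlinarith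

lemma neg_two_mul_le_mul_abs_add_abs_sub_abs_add {a c B : ℝ} (ha : |a| ≤ B) (hc : |c| ≤ B) :
    -(2 * (a * c)) ≤ B * (|a| + |c| - |a + c|) := by
  rcases abs_cases a with ⟨ha, _⟩ | ⟨ha, _⟩ <;> rcases abs_cases c with ⟨hc, _⟩ | ⟨hc, _⟩ <;>
    rcases abs_cases (a + c) with ⟨hac, _⟩ | ⟨hac, _⟩ <;> nlinarith

section ShiftDefect

variable {G : Type*} [AddCommGroup G] (F : G → ℝ) (δ : G) (b : ℝ)

def shiftDefect (γ : G) : ℝ :=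
  |F γ| + |b * F (γ + δ)| - |F γ + b * F (γ + δ)|

lemma shiftDefect_nonneg (γ : G) : 0 ≤ shiftDefect F δ b γ :=
  sub_nonneg.2 (abs_add_le _ _)

variable {F δ b} {α β : G}

lemma shiftDefect_eq_of_mul_neg (hb : |b| = 1) (hαδ : α + δ = β) (hβα : |F β| ≤ |F α|)
    (h : b * (F α * F β) < 0) : shiftDefect F δ b α = 2 * |F β| := by
  have hbβ : |b * F β| = |F β| := by rw [abs_mul, hb, one_mul]
  rw [shiftDefect, hαδ, abs_add_abs_sub_abs_add_of_mul_neg (by linarith) (hbβ.trans_le hβα),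
    hbβ]

variable [Fintype G]

lemma half_sum_abs_add_mul_shift_le (hb : |b| = 1) (s : Finset G) {c : ℝ}
    (h : 2 * c ≤ ∑ γ ∈ s, shiftDefect F δ b γ) :
    1 / 2 * ∑ γ, |F γ + b * F (γ + δ)| ≤ ∑ γ, |F γ| - c := by
  have hshift : ∑ γ, |b * F (γ + δ)| = ∑ γ, |F γ| := by
    simp only [abs_mul, hb, one_mul]
    exact Equiv.sum_comp (Equiv.addRight δ) fun γ => |F γ|
  have htotal : ∑ γ, shiftDefect F δ b γ = 2 * ∑ γ, |F γ| - ∑ γ, |F γ + b * F (γ + δ)| := by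
    simp only [shiftDefect, sum_sub_distrib, sum_add_distrib, hshift]
    ring
  have hsub : ∑ γ ∈ s, shiftDefect F δ b γ ≤ ∑ γ, shiftDefect F δ b γ :=
    sum_le_sum_of_subset_of_nonneg (subset_univ s) fun γ _ _ => shiftDefect_nonneg F δ b γ
  linarith

theorem half_sum_abs_add_mul_shift_le_of_mul_neg (hb : |b| = 1) (hαδ : α + δ = β)
    (hβα : |F β| ≤ |F α|) (h : b * (F α * F β) < 0) :
    1 / 2 * ∑ γ, |F γ + b * F (γ + δ)| ≤ ∑ γ, |F γ| - |F β| :=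
  half_sum_abs_add_mul_shift_le hb {α} <| by
    rw [sum_singleton, shiftDefect_eq_of_mul_neg hb hαδ hβα h]

lemma four_mul_abs_le_sum_shiftDefect [DecidableEq G] (hb : |b| = 1) (hαδ : α + δ = β)
    (hβδ : β + δ = α) (hαβ : α ≠ β) (hcorr : ∑ γ, F γ * F (γ + δ) = 0)
    (hβ : ∀ γ, γ ≠ α → |F γ| ≤ |F β|) (h : 0 < b * (F α * F β)) :
    4 * |F α| ≤ ∑ γ ∈ univ \ {α, β}, shiftDefect F δ b γ := by
  have hδδ : δ + δ = 0 := add_left_cancel (a := α) (by rw [← add_assoc, hαδ, hβδ, add_zero])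
  have hcorrS : ∑ γ ∈ univ \ {α, β}, F γ * F (γ + δ) = -(2 * (F α * F β)) := by
    rw [sum_sdiff_eq_sub (subset_univ _), hcorr, sum_pair hαβ, hαδ, hβδ]
    ring
  have hterm : ∀ γ ∈ univ \ {α, β},
      -(2 * (F γ * (b * F (γ + δ)))) ≤ |F β| * shiftDefect F δ b γ := by
    intro γ hγ
    obtain ⟨hγα, hγβ⟩ : γ ≠ α ∧ γ ≠ β := by simpa using hγ
    have hγδα : γ + δ ≠ α := fun hγδ => hγβ <| by rw [← hαδ, ← hγδ, add_assoc, hδδ, add_zero]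
    refine neg_two_mul_le_mul_abs_add_abs_sub_abs_add (hβ γ hγα) ?_
    rw [abs_mul, hb, one_mul]
    exact hβ _ hγδα
  have hαβ_abs : b * (F α * F β) = |F α| * |F β| := by
    rw [← abs_of_pos h, abs_mul, hb, one_mul, abs_mul]
  have hsum : 4 * (|F α| * |F β|) ≤ |F β| * ∑ γ ∈ univ \ {α, β}, shiftDefect F δ b γ := by
    calc 4 * (|F α| * |F β|) = -(2 * b) * ∑ γ ∈ univ \ {α, β}, F γ * F (γ + δ) := by
          rw [hcorrS, ← hαβ_abs]; ring
      _ = ∑ γ ∈ univ \ {α, β}, -(2 * (F γ * (b * F (γ + δ)))) := by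
          rw [mul_sum]; exact sum_congr rfl fun γ _ => by ring
      _ ≤ _ := by rw [mul_sum]; exact sum_le_sum hterm
  have hβpos : 0 < |F β| := abs_pos.2 fun h0 => by simp [h0] at h
  exact le_of_mul_le_mul_left (by linarith) hβpos

theorem half_sum_abs_add_mul_shift_le_of_mul_pos (hb : |b| = 1) (hαδ : α + δ = β)
    (hβδ : β + δ = α) (hαβ : α ≠ β) (hcorr : ∑ γ, F γ * F (γ + δ) = 0)
    (hβ : ∀ γ, γ ≠ α → |F γ| ≤ |F β|) (h : 0 < b * (F α * F β)) :
    1 / 2 * ∑ γ, |F γ + b * F (γ + δ)| ≤ ∑ γ, |F γ| - 2 * |F α| := by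
  classical
  exact half_sum_abs_add_mul_shift_le hb _
    (by linarith [four_mul_abs_le_sum_shiftDefect hb hαδ hβδ hαβ hcorr hβ h])

end ShiftDefect

section BooleanCube

variable {n : ℕ}

lemma zmodTwo_pi_add_self {ι : Type*} (v : ι → ZMod 2) : v + v = 0 :=
  funext fun i => CharTwo.add_self_eq_zero (v i)

lemma zmodTwo_pi_add_eq_zero_iff {ι : Type*} {v w : ι → ZMod 2} : v + w = 0 ↔ v = w := by
  simp only [funext_iff, Pi.add_apply, Pi.zero_apply, CharTwo.add_eq_zero]

lemma chi_eq_ite (α x : Fin n → ZMod 2) : chi α x = if α ⬝ᵥ x = 0 then 1 else -1 := rfl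

lemma chi_comm (α x : Fin n → ZMod 2) : chi α x = chi x α := by
  rw [chi_eq_ite, chi_eq_ite, dotProduct_comm]

lemma chi_add_right (δ x y : Fin n → ZMod 2) : chi δ (x + y) = chi δ x * chi δ y := by
  have zmodTwo_cases : ∀ a : ZMod 2, a = 0 ∨ a = 1 := by decide
  simp only [chi_eq_ite, dotProduct_add]
  rcases zmodTwo_cases (δ ⬝ᵥ x) with hx | hx <;> rcases zmodTwo_cases (δ ⬝ᵥ y) with hy | hy <;>
    simp [hx, hy, show (1 + 1 : ZMod 2) = 0 from rfl]

lemma chi_add_left (α β x : Fin n → ZMod 2) : chi (α + β) x = chi α x * chi β x := by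
  rw [chi_comm, chi_add_right, chi_comm x, chi_comm x]

lemma sum_chi_eq_zero {δ : Fin n → ZMod 2} (hδ : δ ≠ 0) : ∑ x, chi δ x = 0 := by
  obtain ⟨i, hi⟩ : ∃ i, δ i ≠ 0 := Function.ne_iff.mp hδ
  have hflip : chi δ (Pi.single i 1) = -1 := by
    rw [chi_eq_ite, dotProduct_single, mul_one, if_neg hi]
  have hshift : ∑ x, chi δ x = ∑ x : Fin n → ZMod 2, chi δ (Pi.single i 1 + x) :=
    (Equiv.sum_comp (Equiv.addLeft _) _).symm
  simp only [chi_add_right, hflip, neg_one_mul, sum_neg_distrib] at hshift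
  linarith

lemma sum_chi_mul_chi (x y : Fin n → ZMod 2) :
    ∑ γ, chi γ x * chi γ y = if x = y then (2 ^ n : ℝ) else 0 := by
  simp only [chi_comm _ x, chi_comm _ y, ← chi_add_left]
  split_ifs with hxy
  · simp [hxy, zmodTwo_pi_add_self, chi_eq_ite, card_univ]
  · exact sum_chi_eq_zero fun h => hxy (zmodTwo_pi_add_eq_zero_iff.mp h)

lemma sum_fhat_mul_fhat_add (f : (Fin n → ZMod 2) → ℝ) (δ : Fin n → ZMod 2) :
    ∑ γ, fhat f γ * fhat f (γ + δ) = (2 ^ n : ℝ)⁻¹ * ∑ x, f x ^ 2 * chi δ x := by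
  have hpair : ∀ γ, fhat f γ * fhat f (γ + δ) =
      (2 ^ n : ℝ)⁻¹ ^ 2 * ∑ x, ∑ y, f x * f y * chi δ y * (chi γ x * chi γ y) := by
    intro γ
    simp only [fhat, chi_add_left]
    rw [mul_mul_mul_comm, ← sq, sum_mul_sum]
    congr 1
    exact sum_congr rfl fun x _ => sum_congr rfl fun y _ => by ring
  have horth : ∀ x, ∑ γ, ∑ y, f x * f y * chi δ y * (chi γ x * chi γ y) =
      2 ^ n * (f x ^ 2 * chi δ x) := by
    intro x
    rw [sum_comm]
    simp only [← mul_sum, sum_chi_mul_chi, mul_ite, mul_zero, sum_ite_eq, mem_univ, if_true]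
    ring
  rw [sum_congr rfl fun γ _ => hpair γ, ← mul_sum, sum_comm, sum_congr rfl fun x _ => horth x,
    ← mul_sum]
  field_simp

lemma sum_fhat_mul_fhat_add_eq_zero {f : (Fin n → ZMod 2) → ℝ} (hf : ∀ x, f x = 1 ∨ f x = -1)
    {δ : Fin n → ZMod 2} (hδ : δ ≠ 0) : ∑ γ, fhat f γ * fhat f (γ + δ) = 0 := by
  have hsq : ∀ x, f x ^ 2 = 1 := fun x => by rcases hf x with h | h <;> simp [h]
  simp [sum_fhat_mul_fhat_add, hsq, sum_chi_eq_zero hδ]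

end BooleanCube

theorem restriction_reduces_norm_general {n : ℕ}
    (f : (Fin n → ZMod 2) → ℝ) (hf : ∀ x, f x = 1 ∨ f x = -1)
    (α β : Fin n → ZMod 2)
    (hα : ∀ γ, |fhat f γ| ≤ |fhat f α|)
    (hβα : β ≠ α)
    (hβ : ∀ γ, γ ≠ α → |fhat f γ| ≤ |fhat f β|)
    (δ : Fin n → ZMod 2) (hδ : δ = α + β) :
    (0 < fhat f α * fhat f β →
      (1 / 2) * (∑ γ : Fin n → ZMod 2, |fhat f γ + fhat f (γ + δ)|) ≤
          (∑ γ : Fin n → ZMod 2, |fhat f γ|) - |fhat f α| ∧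
      (1 / 2) * (∑ γ : Fin n → ZMod 2, |fhat f γ - fhat f (γ + δ)|) ≤
          (∑ γ : Fin n → ZMod 2, |fhat f γ|) - |fhat f β|) ∧
    (fhat f α * fhat f β < 0 →
      (1 / 2) * (∑ γ : Fin n → ZMod 2, |fhat f γ + fhat f (γ + δ)|) ≤
          (∑ γ : Fin n → ZMod 2, |fhat f γ|) - |fhat f β| ∧
      (1 / 2) * (∑ γ : Fin n → ZMod 2, |fhat f γ - fhat f (γ + δ)|) ≤
          (∑ γ : Fin n → ZMod 2, |fhat f γ|) - |fhat f α|) := by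
  have hδ0 : δ ≠ 0 := hδ ▸ fun h => hβα (zmodTwo_pi_add_eq_zero_iff.mp h).symm
  have hαδ : α + δ = β := by rw [hδ, ← add_assoc, zmodTwo_pi_add_self, zero_add]
  have hβδ : β + δ = α := by rw [hδ, add_comm α, ← add_assoc, zmodTwo_pi_add_self, zero_add]
  have hcorr := sum_fhat_mul_fhat_add_eq_zero hf hδ0
  have aligned : ∀ b : ℝ, |b| = 1 → 0 < b * (fhat f α * fhat f β) →
      1 / 2 * ∑ γ, |fhat f γ + b * fhat f (γ + δ)| ≤ ∑ γ, |fhat f γ| - |fhat f α| :=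
    fun b hb h => (half_sum_abs_add_mul_shift_le_of_mul_pos hb hαδ hβδ hβα.symm hcorr hβ h).trans
      (by linarith [abs_nonneg (fhat f α)])
  have opposed : ∀ b : ℝ, |b| = 1 → b * (fhat f α * fhat f β) < 0 →
      1 / 2 * ∑ γ, |fhat f γ + b * fhat f (γ + δ)| ≤ ∑ γ, |fhat f γ| - |fhat f β| :=
    fun b hb h => half_sum_abs_add_mul_shift_le_of_mul_neg hb hαδ (hα β) h
  refine ⟨fun h => ⟨?_, ?_⟩, fun h => ⟨?_, ?_⟩⟩
  · simpa using aligned 1 (by simp) (by simpa using h)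
  · simpa [← sub_eq_add_neg] using opposed (-1) (by simp) (by linarith)
  · simpa using opposed 1 (by simp) (by simpa using h)
  · simpa [← sub_eq_add_neg] using aligned (-1) (by simp) (by linarith)

/-- **Lemma 3.1** (Main Lemma over `ZMod 2`): restricting to a suitable affine
hyperplane reduces the spectral norm. Here `(1/2) ∑_γ |f̂(γ) ± f̂(γ+δ)|` is the
spectral norm of the restriction of `f` to `{x : χ_δ(x) = ±1}`. -/
theorem restriction_reduces_norm {n : ℕ}
    (f : (Fin n → ZMod 2) → ℝ) (hf : ∀ x, f x = 1 ∨ f x = -1)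
    (α β : Fin n → ZMod 2)
    (hα : ∀ γ, |fhat f γ| ≤ |fhat f α|)
    (hβα : β ≠ α)
    (hβ : ∀ γ, γ ≠ α → |fhat f γ| ≤ |fhat f β|)
    (hβ0 : fhat f β ≠ 0)
    (δ : Fin n → ZMod 2) (hδ : δ = α + β) :
    (0 < fhat f α * fhat f β →
      (1 / 2) * (∑ γ : Fin n → ZMod 2, |fhat f γ + fhat f (γ + δ)|) ≤
          (∑ γ : Fin n → ZMod 2, |fhat f γ|) - |fhat f α| ∧
      (1 / 2) * (∑ γ : Fin n → ZMod 2, |fhat f γ - fhat f (γ + δ)|) ≤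
          (∑ γ : Fin n → ZMod 2, |fhat f γ|) - |fhat f β|) ∧
    (fhat f α * fhat f β < 0 →
      (1 / 2) * (∑ γ : Fin n → ZMod 2, |fhat f γ + fhat f (γ + δ)|) ≤
          (∑ γ : Fin n → ZMod 2, |fhat f γ|) - |fhat f β| ∧
      (1 / 2) * (∑ γ : Fin n → ZMod 2, |fhat f γ - fhat f (γ + δ)|) ≤
          (∑ γ : Fin n → ZMod 2, |fhat f γ|) - |fhat f α|) :=
  restriction_reduces_norm_general f hf α β hα hβα hβ δ hδ
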